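/- arXiv:2306.14348 — 3 statements merged into one kernel-verified Lean document; each statement's English description precedes it below -/
import Mathlib

section
/- (Deterministic core of Lemma 2.) Let μ, f, y* ∈ ℝ, σ > 0 and β ≥ 0, and suppose |μ − f| ≤ √β · σ. Then σ·τ((μ − y*)/σ) ≥ max(f − y*, 0) − √β · σ. That is, the expected improvement EI = σ·τ(z) with z = (μ − y*)/σ is lower bounded by the true improvement I = (f − y*)⁺ minus √β times the posterior standard deviation. -/
open Real MeasureTheory Filter

/-- The standard normal probability density function φ. -/
noncomputable def stdNormalPDF (z : ℝ) : ℝ := (Real.sqrt (2 * Real.pi))⁻¹ * Real.exp (-z ^ 2 / 2)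

/-- The standard normal cumulative distribution function Φ. -/
noncomputable def stdNormalCDF (z : ℝ) : ℝ := ∫ t in Set.Iic z, stdNormalPDF t

/-- τ(z) = z Φ(z) + φ(z). -/
noncomputable def tau (z : ℝ) : ℝ := z * stdNormalCDF z + stdNormalPDF z

/-
Since φ' = -tφ, τ has the two representations
τ(z) = ∫_{t ≤ z} (z - t) φ(t) dt and τ(z) - z = ∫_{t > z} (t - z) φ(t) dt,
so τ(z) ≥ max(z, 0), i.e. EI ≥ (μ - y*)⁺. Since x ↦ x⁺ is 1-Lipschitz,
(f - y*)⁺ ≤ (μ - y*)⁺ + |μ - f| ≤ EI + √β σ.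
-/

lemma stdNormalPDF_eq_gaussianPDFReal : stdNormalPDF = ProbabilityTheory.gaussianPDFReal 0 1 := by
  ext x
  simp [stdNormalPDF, ProbabilityTheory.gaussianPDFReal]

lemma stdNormalPDF_nonneg (x : ℝ) : 0 ≤ stdNormalPDF x := by
  rw [stdNormalPDF_eq_gaussianPDFReal]
  exact ProbabilityTheory.gaussianPDFReal_nonneg 0 1 x

lemma integrable_stdNormalPDF : Integrable stdNormalPDF := by
  rw [stdNormalPDF_eq_gaussianPDFReal]
  exact ProbabilityTheory.integrable_gaussianPDFReal 0 1

lemma integral_stdNormalPDF : ∫ x, stdNormalPDF x = 1 := by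
  rw [stdNormalPDF_eq_gaussianPDFReal]
  exact ProbabilityTheory.integral_gaussianPDFReal_eq_one 0 one_ne_zero

lemma integrable_mul_stdNormalPDF : Integrable fun x ↦ x * stdNormalPDF x := by
  refine ((integrable_mul_exp_neg_mul_sq (b := 1 / 2) (by norm_num)).const_mul
    (√(2 * π))⁻¹).congr (.of_forall fun x ↦ ?_)
  simp only [stdNormalPDF]
  ring_nf

lemma hasDerivAt_stdNormalPDF (x : ℝ) : HasDerivAt stdNormalPDF (-(x * stdNormalPDF x)) x := by
  have hexponent : HasDerivAt (fun t : ℝ ↦ -t ^ 2 / 2) (-x) x :=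
    ((hasDerivAt_pow 2 x).fun_neg.div_const 2).congr_deriv (by ring)
  exact (hexponent.exp.const_mul (√(2 * π))⁻¹).congr_deriv (by rw [stdNormalPDF]; ring)

lemma integral_Iic_mul_stdNormalPDF (z : ℝ) :
    ∫ t in Set.Iic z, t * stdNormalPDF t = -stdNormalPDF z := by
  have hderiv (x : ℝ) (_ : x ∈ Set.Iic z) := hasDerivAt_stdNormalPDF x
  have hint := integrable_mul_stdNormalPDF.neg.integrableOn (s := Set.Iic z)
  have hftc := integral_Iic_of_hasDerivAt_of_tendsto' hderiv hint
    (tendsto_zero_of_hasDerivAt_of_integrableOn_Iic hderiv hint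
      integrable_stdNormalPDF.integrableOn)
  rw [integral_neg, sub_zero] at hftc
  linarith

lemma integral_Ioi_mul_stdNormalPDF (z : ℝ) :
    ∫ t in Set.Ioi z, t * stdNormalPDF t = stdNormalPDF z := by
  have hderiv (x : ℝ) (_ : x ∈ Set.Ici z) := hasDerivAt_stdNormalPDF x
  have hint := integrable_mul_stdNormalPDF.neg.integrableOn (s := Set.Ioi z)
  have hftc := integral_Ioi_of_hasDerivAt_of_tendsto' hderiv hint
    (tendsto_zero_of_hasDerivAt_of_integrableOn_Ioi (fun x hx ↦ hderiv x (Set.Ioi_subset_Ici_self hx)) hint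
      integrable_stdNormalPDF.integrableOn)
  rw [integral_neg, zero_sub] at hftc
  linarith

lemma one_sub_stdNormalCDF (z : ℝ) : 1 - stdNormalCDF z = ∫ t in Set.Ioi z, stdNormalPDF t := by
  rw [← integral_stdNormalPDF, ← intervalIntegral.integral_Iic_add_Ioi
    integrable_stdNormalPDF.integrableOn integrable_stdNormalPDF.integrableOn, stdNormalCDF]
  ring

lemma tau_eq_integral_Iic (z : ℝ) : tau z = ∫ t in Set.Iic z, (z - t) * stdNormalPDF t := by
  simp_rw [sub_mul]
  rw [integral_sub (integrable_stdNormalPDF.const_mul z).integrableOn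
    integrable_mul_stdNormalPDF.integrableOn, integral_const_mul, integral_Iic_mul_stdNormalPDF,
    tau, stdNormalCDF]
  ring

lemma tau_sub_self_eq_integral_Ioi (z : ℝ) :
    tau z - z = ∫ t in Set.Ioi z, (t - z) * stdNormalPDF t := by
  simp_rw [sub_mul]
  rw [integral_sub integrable_mul_stdNormalPDF.integrableOn
    (integrable_stdNormalPDF.const_mul z).integrableOn, integral_const_mul,
    integral_Ioi_mul_stdNormalPDF, ← one_sub_stdNormalCDF, tau]
  ring

lemma tau_nonneg (z : ℝ) : 0 ≤ tau z := by
  rw [tau_eq_integral_Iic]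
  exact setIntegral_nonneg measurableSet_Iic fun t ht ↦
    mul_nonneg (sub_nonneg.2 ht) (stdNormalPDF_nonneg t)

lemma le_tau (z : ℝ) : z ≤ tau z := by
  rw [← sub_nonneg, tau_sub_self_eq_integral_Ioi]
  exact setIntegral_nonneg measurableSet_Ioi fun t ht ↦
    mul_nonneg (sub_nonneg.2 (le_of_lt ht)) (stdNormalPDF_nonneg t)

lemma max_zero_le_mul_tau_div (a : ℝ) {σ : ℝ} (hσ : 0 < σ) : max a 0 ≤ σ * tau (a / σ) := by
  refine max_le ?_ (mul_nonneg hσ.le (tau_nonneg _))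
  calc a = σ * (a / σ) := (mul_div_cancel₀ a hσ.ne').symm
    _ ≤ σ * tau (a / σ) := mul_le_mul_of_nonneg_left (le_tau _) hσ.le

theorem ei_lower_bound_general (μ f ystar σ β : ℝ) (hσ : 0 < σ)
    (h : |μ - f| ≤ Real.sqrt β * σ) :
    σ * tau ((μ - ystar) / σ) ≥ max (f - ystar) 0 - Real.sqrt β * σ := by
  have hEI := max_zero_le_mul_tau_div (μ - ystar) hσ
  have hLipschitz : max (f - ystar) 0 - max (μ - ystar) 0 ≤ |μ - f| := by
    have := abs_max_sub_max_le_abs (f - ystar) (μ - ystar) 0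
    rw [sub_sub_sub_cancel_right, abs_sub_comm f μ] at this
    exact (le_abs_self _).trans this
  linarith

theorem ei_lower_bound (μ f ystar σ β : ℝ) (hσ : 0 < σ) (hβ : 0 ≤ β)
    (h : |μ - f| ≤ Real.sqrt β * σ) :
    σ * tau ((μ - ystar) / σ) ≥ max (f - ystar) 0 - Real.sqrt β * σ :=
  ei_lower_bound_general μ f ystar σ β hσ h
end

section
/- (Lemma 5.) Let v > 0, let T ≥ 1, and let σ₁, …, σ_T be real numbers with 0 ≤ σ_t² ≤ 1 for all t. Define γ = (1/2) Σ_{t=1}^{T} log(1 + v⁻²·σ_t²). Then Σ_{t=1}^{T} σ_t² ≤ (2 / log(1 + v⁻²)) · γ. -/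
/-!
By concavity of the logarithm (in the form of Bernoulli's inequality `(1 + c) ^ x ≤ 1 + x c`),
every term satisfies `σ_t² log (1 + v⁻²) ≤ log (1 + v⁻² σ_t²)` as soon as `0 ≤ σ_t² ≤ 1`.
Summing over `t` and dividing by `log (1 + v⁻²) > 0` gives the bound.
-/

open Real Finset

theorem mul_log_one_add_le_log_one_add_mul {c x : ℝ} (hc : -1 < c) (hx₀ : 0 ≤ x) (hx₁ : x ≤ 1) :
    x * log (1 + c) ≤ log (1 + c * x) := by
  have hpos : 0 < 1 + c := by linarith
  calc x * log (1 + c) = log ((1 + c) ^ x) := (log_rpow hpos x).symm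
    _ ≤ log (1 + x * c) :=
        log_le_log (by positivity) (rpow_one_add_le_one_add_mul_self hc.le hx₀ hx₁)
    _ = log (1 + c * x) := by rw [mul_comm]

theorem sum_mul_log_one_add_le_sum_log_one_add_mul {ι : Type*} (s : Finset ι) (x : ι → ℝ)
    {c : ℝ} (hc : -1 < c) (hx : ∀ i ∈ s, 0 ≤ x i ∧ x i ≤ 1) :
    (∑ i ∈ s, x i) * log (1 + c) ≤ ∑ i ∈ s, log (1 + c * x i) := by
  rw [sum_mul]
  exact sum_le_sum fun i hi => mul_log_one_add_le_log_one_add_mul hc (hx i hi).1 (hx i hi).2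

theorem cumulative_variance_bound_general (v : ℝ) (hv : 0 < v) (T : ℕ)
    (σ : ℕ → ℝ) (hσ : ∀ t ∈ Finset.Icc 1 T, 0 ≤ (σ t) ^ 2 ∧ (σ t) ^ 2 ≤ 1) :
    ∑ t ∈ Finset.Icc 1 T, (σ t) ^ 2 ≤
      (2 / Real.log (1 + (v ^ 2)⁻¹)) *
        ((1 / 2) * ∑ t ∈ Finset.Icc 1 T, Real.log (1 + (v ^ 2)⁻¹ * (σ t) ^ 2)) := by
  have hc : 0 < (v ^ 2)⁻¹ := by positivity
  have hlog : 0 < log (1 + (v ^ 2)⁻¹) := log_pos (by linarith)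
  have key := sum_mul_log_one_add_le_sum_log_one_add_mul (Icc 1 T) (fun t => σ t ^ 2)
    (by linarith : -1 < (v ^ 2)⁻¹) hσ
  rw [div_mul_eq_mul_div, le_div_iff₀ hlog]
  linarith

theorem cumulative_variance_bound (v : ℝ) (hv : 0 < v) (T : ℕ) (hT : 1 ≤ T)
    (σ : ℕ → ℝ) (hσ : ∀ t ∈ Finset.Icc 1 T, 0 ≤ (σ t) ^ 2 ∧ (σ t) ^ 2 ≤ 1) :
    ∑ t ∈ Finset.Icc 1 T, (σ t) ^ 2 ≤
      (2 / Real.log (1 + (v ^ 2)⁻¹)) *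
        ((1 / 2) * ∑ t ∈ Finset.Icc 1 T, Real.log (1 + (v ^ 2)⁻¹ * (σ t) ^ 2)) :=
  cumulative_variance_bound_general v hv T σ hσ
end

section
/- (Deterministic cumulative-regret assembly underlying Theorem 1.) Let T ≥ 1, v > 0, C ≥ 0 and γ ≥ 0. Let (β_t)_{t=1}^{T} be a nondecreasing sequence of nonnegative reals, let (σ_t)_{t=1}^{T} and (σ′_t)_{t=1}^{T} be nonnegative reals satisfying Σ_{t=1}^{T} σ_t² ≤ 2γ / log(1 + v⁻²) and Σ_{t=1}^{T} (σ′_t)² ≤ 2γ / log(1 + v⁻²), let (e_t)_{t=1}^{T} be nonnegative reals, and let (r_t)_{t=1}^{T} be reals satisfying r_t ≤ σ_t·(√β_t + 1 + √C) + √β_t·σ′_t + e_t for every t. Then Σ_{t=1}^{T} r_t ≤ √(6T(β_T + 1 + C)γ / log(1 + v⁻²)) + √(2Tβ_Tγ / log(1 + v⁻²)) + Σ_{t=1}^{T} e_t. -/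
/-! Bound each regret by `σ_t (√β_T + 1 + √C) + √β_T σ'_t + e_t` using that `β` is nondecreasing,
sum over `t`, and control `∑ σ_t` and `∑ σ'_t` by Cauchy–Schwarz, `(∑ σ_t)² ≤ T ∑ σ_t²`.
The constant `6` comes from `(√β + 1 + √C)² ≤ 3 (β + 1 + C)`. -/

open Finset Real

theorem sqrt_add_one_add_sqrt_le {x y : ℝ} (hx : 0 ≤ x) (hy : 0 ≤ y) :
    √x + 1 + √y ≤ √(3 * (x + 1 + y)) := by
  apply Real.le_sqrt_of_sq_le
  have hx' := Real.sq_sqrt hx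
  have hy' := Real.sq_sqrt hy
  nlinarith [sq_nonneg (√x - 1), sq_nonneg (√x - √y), sq_nonneg (√y - 1)]

theorem Finset.sqrt_mul_sum_le_of_sum_sq_le {ι : Type*} (s : Finset ι) (f : ι → ℝ) {a B : ℝ}
    (ha : 0 ≤ a) (hf : ∑ i ∈ s, f i ^ 2 ≤ B) :
    √a * ∑ i ∈ s, f i ≤ √(a * (#s * B)) := by
  have hsum : ∑ i ∈ s, f i ≤ √(#s * B) :=
    Real.le_sqrt_of_sq_le <| sq_sum_le_card_mul_sum_sq.trans <|
      mul_le_mul_of_nonneg_left hf (Nat.cast_nonneg _)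
  rw [Real.sqrt_mul ha]
  exact mul_le_mul_of_nonneg_left hsum (Real.sqrt_nonneg a)

theorem cumulative_regret_assembly_general (T : ℕ) (v C γ : ℝ)
    (hC : 0 ≤ C)
    (β σ σ' e r : ℕ → ℝ)
    (hβmono : ∀ s t, s ≤ t → β s ≤ β t) (hβ : ∀ t, 0 ≤ β t)
    (hσ : ∀ t, 0 ≤ σ t) (hσ' : ∀ t, 0 ≤ σ' t)
    (hsumσ : ∑ t ∈ Finset.Icc 1 T, (σ t) ^ 2 ≤ 2 * γ / Real.log (1 + (v ^ 2)⁻¹))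
    (hsumσ' : ∑ t ∈ Finset.Icc 1 T, (σ' t) ^ 2 ≤ 2 * γ / Real.log (1 + (v ^ 2)⁻¹))
    (hr : ∀ t ∈ Finset.Icc 1 T,
      r t ≤ σ t * (Real.sqrt (β t) + 1 + Real.sqrt C) + Real.sqrt (β t) * σ' t + e t) :
    ∑ t ∈ Finset.Icc 1 T, r t ≤
      Real.sqrt (6 * T * (β T + 1 + C) * γ / Real.log (1 + (v ^ 2)⁻¹)) +
      Real.sqrt (2 * T * β T * γ / Real.log (1 + (v ^ 2)⁻¹)) +
      ∑ t ∈ Finset.Icc 1 T, e t := by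
  set B := 2 * γ / Real.log (1 + (v ^ 2)⁻¹) with hB
  set s := Icc 1 T
  have hcard : (#s : ℝ) = T := by simp [s]
  have hr_at_T : ∀ t ∈ s, r t ≤ σ t * (√(β T) + 1 + √C) + √(β T) * σ' t + e t := by
    intro t ht
    have hsqrt : √(β t) ≤ √(β T) := Real.sqrt_le_sqrt (hβmono t T (mem_Icc.mp ht).2)
    refine (hr t ht).trans ?_
    gcongr
    exacts [hσ t, hσ' t]
  have hsum : ∑ t ∈ s, r t ≤
      (√(β T) + 1 + √C) * ∑ t ∈ s, σ t + √(β T) * ∑ t ∈ s, σ' t + ∑ t ∈ s, e t := by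
    simpa only [sum_add_distrib, ← sum_mul, ← mul_sum, mul_comm] using sum_le_sum hr_at_T
  have hσ_term : (√(β T) + 1 + √C) * ∑ t ∈ s, σ t ≤
      √(6 * T * (β T + 1 + C) * γ / Real.log (1 + (v ^ 2)⁻¹)) := by
    calc (√(β T) + 1 + √C) * ∑ t ∈ s, σ t
        ≤ √(3 * (β T + 1 + C)) * ∑ t ∈ s, σ t :=
          mul_le_mul_of_nonneg_right (sqrt_add_one_add_sqrt_le (hβ T) hC)
            (sum_nonneg fun t _ => hσ t)
      _ ≤ √(3 * (β T + 1 + C) * (#s * B)) :=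
          s.sqrt_mul_sum_le_of_sum_sq_le σ (by linarith [hβ T]) hsumσ
      _ = _ := by rw [hcard, hB]; congr 1; ring
  have hσ'_term : √(β T) * ∑ t ∈ s, σ' t ≤
      √(2 * T * β T * γ / Real.log (1 + (v ^ 2)⁻¹)) := by
    calc √(β T) * ∑ t ∈ s, σ' t ≤ √(β T * (#s * B)) :=
          s.sqrt_mul_sum_le_of_sum_sq_le σ' (hβ T) hsumσ'
      _ = _ := by rw [hcard, hB]; congr 1; ring
  linarith

theorem cumulative_regret_assembly (T : ℕ) (hT : 1 ≤ T) (v C γ : ℝ)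
    (hv : 0 < v) (hC : 0 ≤ C) (hγ : 0 ≤ γ)
    (β σ σ' e r : ℕ → ℝ)
    (hβmono : ∀ s t, s ≤ t → β s ≤ β t) (hβ : ∀ t, 0 ≤ β t)
    (hσ : ∀ t, 0 ≤ σ t) (hσ' : ∀ t, 0 ≤ σ' t) (he : ∀ t, 0 ≤ e t)
    (hsumσ : ∑ t ∈ Finset.Icc 1 T, (σ t) ^ 2 ≤ 2 * γ / Real.log (1 + (v ^ 2)⁻¹))
    (hsumσ' : ∑ t ∈ Finset.Icc 1 T, (σ' t) ^ 2 ≤ 2 * γ / Real.log (1 + (v ^ 2)⁻¹))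
    (hr : ∀ t ∈ Finset.Icc 1 T,
      r t ≤ σ t * (Real.sqrt (β t) + 1 + Real.sqrt C) + Real.sqrt (β t) * σ' t + e t) :
    ∑ t ∈ Finset.Icc 1 T, r t ≤
      Real.sqrt (6 * T * (β T + 1 + C) * γ / Real.log (1 + (v ^ 2)⁻¹)) +
      Real.sqrt (2 * T * β T * γ / Real.log (1 + (v ^ 2)⁻¹)) +
      ∑ t ∈ Finset.Icc 1 T, e t :=
  cumulative_regret_assembly_general T v C γ hC β σ σ' e r hβmono hβ hσ hσ' hsumσ hsumσ' hr
end
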